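/- arXiv:1504.02523 — 2 statements merged into one kernel-verified Lean document; each statement's English description precedes it below -/
import Mathlib

section
/- Let x and Θ be natural numbers with Θ < x, and let S be a subset of Fin x chosen uniformly at random (each of the 2^x subsets equally likely). Then the probability that |(x : ℤ) − 2·|S|| ≤ Θ equals (∑_{i=⌈(x−Θ)/2⌉}^{⌊(x+Θ)/2⌋} C(x, i)) / 2^x. (This is Theorem 2 of the paper: if two record utilization vectors differ in exactly x bits and the assignment of the x differing 1-bits between the two vectors is uniformly random, then the probability that their 1-bit counts differ by at most Θ is the stated central binomial sum divided by 2^x.) -/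
/-- For a uniformly random subset `S` of a set of `x` elements
(each of the `2^x` subsets equally likely), the probability that
`|x − 2|S|| ≤ Θ` equals `(∑_{i=⌈(x−Θ)/2⌉}^{⌊(x+Θ)/2⌋} C(x, i)) / 2^x`. -/
theorem prob_central_binomial (x Θ : ℕ) (hΘx : Θ < x) :
    ((Finset.univ.filter
        (fun S : Finset (Fin x) =>
          |(x : ℤ) - 2 * (S.card : ℤ)| ≤ (Θ : ℤ))).card : ℚ) / 2 ^ x
      = (∑ i ∈ Finset.Icc ⌈((x : ℚ) - (Θ : ℚ)) / 2⌉ ⌊((x : ℚ) + (Θ : ℚ)) / 2⌋,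
          (x.choose i.toNat : ℚ)) / 2 ^ x := by
  have hΘx' : (Θ : ℚ) ≤ x := by exact_mod_cast hΘx.le
  set c : ℤ := ⌈((x : ℚ) - (Θ : ℚ)) / 2⌉ with hc
  set d : ℤ := ⌊((x : ℚ) + (Θ : ℚ)) / 2⌋ with hd
  have hc0 : 0 ≤ c := Int.ceil_nonneg (div_nonneg (sub_nonneg.2 hΘx') (by norm_num))
  have hd0 : 0 ≤ d := Int.floor_nonneg.2 (div_nonneg (by positivity) (by norm_num))
  have h1 : ∀ k : ℕ, (c.toNat ≤ k ↔ (x : ℚ) - 2 * k ≤ (Θ : ℚ)) := by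
    intro k
    rw [Int.toNat_le, hc, Int.ceil_le]
    push_cast
    constructor <;> intro h <;> linarith
  have h2 : ∀ k : ℕ, (k ≤ d.toNat ↔ -(Θ : ℚ) ≤ (x : ℚ) - 2 * k) := by
    intro k
    rw [Int.le_toNat hd0, hd, Int.le_floor]
    push_cast
    constructor <;> intro h <;> linarith
  have hset : Finset.univ.filter
        (fun S : Finset (Fin x) => |(x : ℤ) - 2 * (S.card : ℤ)| ≤ (Θ : ℤ))
      = (Finset.Icc c.toNat d.toNat).biUnion
          (fun k => Finset.powersetCard k (Finset.univ : Finset (Fin x))) := by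
    ext S
    simp only [Finset.mem_filter, Finset.mem_univ, true_and, Finset.mem_biUnion,
      Finset.mem_Icc, Finset.mem_powersetCard, abs_le]
    constructor
    · rintro ⟨hl, hr⟩
      exact ⟨S.card, ⟨(h1 S.card).2 (by exact_mod_cast hr),
        (h2 S.card).2 (by exact_mod_cast hl)⟩, S.subset_univ, rfl⟩
    · rintro ⟨k, ⟨hk1, hk2⟩, -, rfl⟩
      exact ⟨by exact_mod_cast (h2 _).1 hk2, by exact_mod_cast (h1 _).1 hk1⟩
  have hcard : (Finset.univ.filter
        (fun S : Finset (Fin x) => |(x : ℤ) - 2 * (S.card : ℤ)| ≤ (Θ : ℤ))).card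
      = ∑ k ∈ Finset.Icc c.toNat d.toNat, x.choose k := by
    rw [hset, Finset.card_biUnion]
    · refine Finset.sum_congr rfl fun k _ => ?_
      rw [Finset.card_powersetCard, Finset.card_univ, Fintype.card_fin]
    · intro a _ b _ hab
      simp only [Finset.disjoint_left, Finset.mem_powersetCard]
      rintro S ⟨-, rfl⟩ ⟨-, h⟩
      exact hab h
  have hsum : ∑ i ∈ Finset.Icc c d, (x.choose i.toNat : ℚ)
      = ∑ k ∈ Finset.Icc c.toNat d.toNat, (x.choose k : ℚ) := by
    refine Finset.sum_nbij' (fun i => i.toNat) (fun k => (k : ℤ)) ?_ ?_ ?_ ?_ ?_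
    · intro i hi
      rw [Finset.mem_Icc] at hi ⊢
      constructor
      · exact Int.toNat_le_toNat hi.1
      · rw [Int.le_toNat hd0, Int.toNat_of_nonneg (hc0.trans hi.1)]; exact hi.2
    · intro k hk
      rw [Finset.mem_Icc] at hk ⊢
      exact ⟨(Int.toNat_le.mp hk.1 : c ≤ (k : ℤ)), (Int.le_toNat hd0).mp hk.2⟩
    · intro i hi
      rw [Finset.mem_Icc] at hi
      exact Int.toNat_of_nonneg (hc0.trans hi.1)
    · intro k _
      exact Int.toNat_natCast k
    · intro i _
      rfl
  rw [hcard, hsum]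
  push_cast
  ring
end

section
/- Let k be a positive integer and let l₁, l₂ ≤ k be natural numbers; set l_max = max(l₁, l₂) and l_min = min(l₁, l₂). Choose a pair (A, B) uniformly at random among all C(k, l₁)·C(k, l₂) pairs of subsets of Fin k with |A| = l₁ and |B| = l₂. Then the probability that |A Δ B| = l_max − l_min (i.e. that the Hamming distance between the corresponding record utilization vectors equals the difference of their 1-bit counts, which is the value reported by the b = 1 counter transformation) equals (C(l_max, l_min) · C(k, l_max)) / (C(k, l_max) · C(k, l_min)). (This is Theorem 3 of the paper, 'Effects of Grouping'.) -/
lemma symmDiff_card_iff {n : ℕ} (A B : Finset (Fin n)) (hab : A.card ≤ B.card) :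
    (symmDiff A B).card = B.card - A.card ↔ A ⊆ B := by
  constructor
  · intro h
    have hd : Disjoint (A \ B) (B \ A) := disjoint_sdiff_sdiff
    have hs : symmDiff A B = (A \ B) ∪ (B \ A) := symmDiff_def A B
    rw [hs, Finset.card_union_of_disjoint hd] at h
    have h1 : (A \ B).card + (A ∩ B).card = A.card := Finset.card_sdiff_add_card_inter A B
    have h2 : (B \ A).card + (B ∩ A).card = B.card := Finset.card_sdiff_add_card_inter B A
    have h3 : (A ∩ B).card = (B ∩ A).card := by rw [Finset.inter_comm]
    have : (A \ B).card = 0 := by omega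
    rw [Finset.card_eq_zero, Finset.sdiff_eq_empty_iff_subset] at this
    exact this
  · intro h
    rw [symmDiff_of_le h, Finset.card_sdiff_of_subset h]

lemma count_lemma (k a b : ℕ) (hab : a ≤ b) :
    (Finset.univ.filter
        (fun p : Finset (Fin k) × Finset (Fin k) =>
          p.1.card = a ∧ p.2.card = b ∧ (symmDiff p.1 p.2).card = b - a)).card
      = b.choose a * k.choose b := by
  have hcong : (Finset.univ.filter
        (fun p : Finset (Fin k) × Finset (Fin k) =>
          p.1.card = a ∧ p.2.card = b ∧ (symmDiff p.1 p.2).card = b - a))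
      = (Finset.univ.filter
        (fun p : Finset (Fin k) × Finset (Fin k) =>
          p.1.card = a ∧ p.2.card = b ∧ p.1 ⊆ p.2)) := by
    apply Finset.filter_congr
    intro p _
    constructor
    · rintro ⟨h1, h2, h3⟩
      exact ⟨h1, h2, (symmDiff_card_iff p.1 p.2 (by omega)).1 (by omega)⟩
    · rintro ⟨h1, h2, h3⟩
      refine ⟨h1, h2, ?_⟩
      have := (symmDiff_card_iff p.1 p.2 (by omega)).2 h3
      omega
  rw [hcong]
  have hbij : (Finset.univ.filter
        (fun p : Finset (Fin k) × Finset (Fin k) =>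
          p.1.card = a ∧ p.2.card = b ∧ p.1 ⊆ p.2)).card
      = ((Finset.univ.powersetCard b).sigma
          (fun B : Finset (Fin k) => B.powersetCard a)).card := by
    refine Finset.card_bij' (fun p _ => ⟨p.2, p.1⟩) (fun s _ => (s.2, s.1)) ?_ ?_ ?_ ?_
    · intro p hp
      simp only [Finset.mem_filter] at hp
      simp only [Finset.mem_sigma, Finset.mem_powersetCard]
      exact ⟨⟨Finset.subset_univ _, hp.2.2.1⟩, hp.2.2.2, hp.2.1⟩
    · intro s hs
      simp only [Finset.mem_sigma, Finset.mem_powersetCard] at hs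
      simp only [Finset.mem_filter]
      exact ⟨Finset.mem_univ _, hs.2.2, hs.1.2, hs.2.1⟩
    · intro p _; rfl
    · intro s _; rfl
  rw [hbij, Finset.card_sigma]
  rw [Finset.sum_congr rfl (fun B hB => by
    rw [Finset.card_powersetCard, (Finset.mem_powersetCard.1 hB).2]), Finset.sum_const,
    Finset.card_powersetCard, Finset.card_univ, Fintype.card_fin, smul_eq_mul, mul_comm]

lemma swap_count (k a b d : ℕ) :
    (Finset.univ.filter
        (fun p : Finset (Fin k) × Finset (Fin k) =>
          p.1.card = a ∧ p.2.card = b ∧ (symmDiff p.1 p.2).card = d)).card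
      = (Finset.univ.filter
        (fun p : Finset (Fin k) × Finset (Fin k) =>
          p.1.card = b ∧ p.2.card = a ∧ (symmDiff p.1 p.2).card = d)).card := by
  refine Finset.card_bij' (fun p _ => p.swap) (fun p _ => p.swap) ?_ ?_ ?_ ?_
  · intro p hp
    rw [Finset.mem_filter] at hp ⊢
    exact ⟨Finset.mem_univ _, hp.2.2.1, hp.2.1, by rw [Prod.snd_swap, Prod.fst_swap, symmDiff_comm]; exact hp.2.2.2⟩
  · intro p hp
    rw [Finset.mem_filter] at hp ⊢
    exact ⟨Finset.mem_univ _, hp.2.2.1, hp.2.1, by rw [Prod.snd_swap, Prod.fst_swap, symmDiff_comm]; exact hp.2.2.2⟩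
  · intro p _; exact Prod.swap_swap p
  · intro p _; exact Prod.swap_swap p

/-- Theorem 3, 'Effects of Grouping': For a pair `(A, B)` chosen
uniformly among the `C(k,l₁)·C(k,l₂)` pairs of subsets of `Fin k` with
`|A| = l₁`, `|B| = l₂`, the probability that `|A Δ B| = l_max − l_min` equals
`(C(l_max, l_min) · C(k, l_max)) / (C(k, l_max) · C(k, l_min))`. -/
theorem prob_symmDiff_min (k : ℕ) (hk : 0 < k)
    (l₁ l₂ : ℕ) (hl₁ : l₁ ≤ k) (hl₂ : l₂ ≤ k)
    (lmax lmin : ℕ) (hmax : lmax = max l₁ l₂) (hmin : lmin = min l₁ l₂) :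
    ((Finset.univ.filter
        (fun p : Finset (Fin k) × Finset (Fin k) =>
          p.1.card = l₁ ∧ p.2.card = l₂ ∧
            (symmDiff p.1 p.2).card = lmax - lmin)).card : ℚ)
        / ((k.choose l₁ * k.choose l₂ : ℕ) : ℚ)
      = ((lmax.choose lmin * k.choose lmax : ℕ) : ℚ)
        / ((k.choose lmax * k.choose lmin : ℕ) : ℚ) := by
  rcases le_total l₁ l₂ with h | h
  · have hmax' : lmax = l₂ := by omega
    have hmin' : lmin = l₁ := by omega
    rw [hmax', hmin', count_lemma k l₁ l₂ h, Nat.mul_comm (k.choose l₂) (k.choose l₁)]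
  · have hmax' : lmax = l₁ := by omega
    have hmin' : lmin = l₂ := by omega
    rw [hmax', hmin', swap_count, count_lemma k l₂ l₁ h,
      Nat.mul_comm (k.choose l₁) (k.choose l₂)]
end
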